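/- With the notation of the natural gradient system ẋ = h(x,t) = -M(x)⁻¹ ∂f/∂x, the function f is geodesically α-strongly convex in metric M for each t (Riemannian Hessian H(x,t) ⪰ α M(x) for all x) if and only if the natural gradient flow is contracting with rate α in metric M, i.e., Ṁ + AᵀM + MA ⪯ -2αM with A = ∂h/∂x. -/

import Mathlib

open Matrix

/-- Partial derivative ∂f/∂xᵢ in coordinates. -/
noncomputable def pd {ι : Type*} [Fintype ι] [DecidableEq ι]
    (f : (ι → ℝ) → ℝ) (i : ι) (x : ι → ℝ) : ℝ :=
  fderiv ℝ f x (Pi.single i 1)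

/-- Christoffel symbols of the second kind Γᵐ_{ij} of the metric M. -/
noncomputable def christoffel {ι : Type*} [Fintype ι] [DecidableEq ι]
    (M : (ι → ℝ) → Matrix ι ι ℝ) (m i j : ι) (x : ι → ℝ) : ℝ :=
  (1 / 2) * ∑ k, (M x)⁻¹ m k *
    (pd (fun y => M y i k) j x + pd (fun y => M y j k) i x - pd (fun y => M y i j) k x)

/-- Riemannian Hessian: H_{ij} = ∂²f/∂xᵢ∂xⱼ - Γᵏ_{ij} ∂f/∂xₖ. -/
noncomputable def riemHess {ι : Type*} [Fintype ι] [DecidableEq ι]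
    (M : (ι → ℝ) → Matrix ι ι ℝ) (f : (ι → ℝ) → ℝ) (x : ι → ℝ) : Matrix ι ι ℝ :=
  Matrix.of fun i j =>
    pd (fun y => pd f j y) i x - ∑ k, christoffel M k i j x * pd f k x

/-- Natural gradient vector field h(x,t) = -M(x)⁻¹ ∂f/∂x(x,t). -/
noncomputable def natGrad {n : ℕ} (M : (Fin n → ℝ) → Matrix (Fin n) (Fin n) ℝ)
    (f : (Fin n → ℝ) → ℝ → ℝ) (x : Fin n → ℝ) (t : ℝ) : Fin n → ℝ :=
  -((M x)⁻¹.mulVec fun i => pd (fun y => f y t) i x)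

/-- Jacobian ∂h/∂x of a (time-dependent) vector field. -/
noncomputable def jacobian {n : ℕ} (h : (Fin n → ℝ) → ℝ → Fin n → ℝ)
    (x : Fin n → ℝ) (t : ℝ) : Matrix (Fin n) (Fin n) ℝ :=
  Matrix.of fun i j => pd (fun y => h y t i) j x

/-- Ṁ = Σᵢ (∂M/∂xᵢ) hᵢ along the vector field h. -/
noncomputable def mDot {n : ℕ} (M : (Fin n → ℝ) → Matrix (Fin n) (Fin n) ℝ)
    (h : (Fin n → ℝ) → ℝ → Fin n → ℝ) (x : Fin n → ℝ) (t : ℝ) :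
    Matrix (Fin n) (Fin n) ℝ :=
  Matrix.of fun i j => ∑ k, pd (fun y => M y i j) k x * h x t k

section helpers

variable {ι : Type*} [Fintype ι] [DecidableEq ι]

lemma pd_sum {κ : Type*} (s : Finset κ) (F : κ → (ι → ℝ) → ℝ) (j : ι) (x : ι → ℝ)
    (h : ∀ l ∈ s, DifferentiableAt ℝ (F l) x) :
    pd (fun y => ∑ l ∈ s, F l y) j x = ∑ l ∈ s, pd (F l) j x := by
  unfold pd
  rw [fderiv_fun_sum h]
  simp

lemma pd_mul {F G : (ι → ℝ) → ℝ} {x : ι → ℝ} (j : ι)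
    (hF : DifferentiableAt ℝ F x) (hG : DifferentiableAt ℝ G x) :
    pd (fun y => F y * G y) j x = F x * pd G j x + pd F j x * G x := by
  unfold pd
  rw [fderiv_fun_mul hF hG]
  simp [smul_eq_mul]
  ring

lemma pd_neg {F : (ι → ℝ) → ℝ} {x : ι → ℝ} (j : ι) :
    pd (fun y => -F y) j x = -pd F j x := by
  unfold pd
  rw [fderiv_fun_neg]
  simp

lemma pd_expr {F : (ι → ℝ) → ℝ}
    (hF : ContDiff ℝ 2 F) (x : ι → ℝ) (i j : ι) :
    pd (fun y => pd F j y) i x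
      = fderiv ℝ (fderiv ℝ F) x (Pi.single i 1) (Pi.single j 1) := by
  have hdfd : DifferentiableAt ℝ (fderiv ℝ F) x := by
    have h1 : ContDiff ℝ 1 (fderiv ℝ F) := hF.fderiv_right (by norm_num)
    exact (h1.differentiable one_ne_zero) x
  unfold pd
  rw [fderiv_clm_apply hdfd (differentiableAt_const _)]
  simp

lemma pd_pd_symm {F : (ι → ℝ) → ℝ}
    (hF : ContDiff ℝ 2 F) (x : ι → ℝ) (i j : ι) :
    pd (fun y => pd F j y) i x = pd (fun y => pd F i y) j x := by
  rw [pd_expr hF, pd_expr hF]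
  have hdF : ∀ y, HasFDerivAt F (fderiv ℝ F y) y := fun y =>
    ((hF.differentiable two_ne_zero) y).hasFDerivAt
  have hdfd : DifferentiableAt ℝ (fderiv ℝ F) x := by
    have h1 : ContDiff ℝ 1 (fderiv ℝ F) := hF.fderiv_right (by norm_num)
    exact (h1.differentiable one_ne_zero) x
  exact second_derivative_symmetric hdF hdfd.hasFDerivAt _ _

lemma pd_contDiff {F : (ι → ℝ) → ℝ}
    (hF : ContDiff ℝ 2 F) (i : ι) : ContDiff ℝ 1 fun y => pd F i y := by
  have h1 : ContDiff ℝ 1 (fderiv ℝ F) := hF.fderiv_right (by norm_num)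
  exact (ContinuousLinearMap.apply ℝ ℝ (Pi.single i 1)).contDiff.comp h1

lemma contDiff_det_comp {n : ℕ} {N : (Fin n → ℝ) → Matrix (Fin n) (Fin n) ℝ}
    (hN : ∀ i j, ContDiff ℝ (⊤ : ℕ∞) fun x => N x i j) :
    ContDiff ℝ (⊤ : ℕ∞) fun x => (N x).det := by
  simp only [Matrix.det_apply']
  exact ContDiff.sum fun σ _ =>
    contDiff_const.mul (contDiff_prod fun i _ => hN (σ i) i)

lemma contDiff_adjugate_comp {n : ℕ} {N : (Fin n → ℝ) → Matrix (Fin n) (Fin n) ℝ}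
    (hN : ∀ i j, ContDiff ℝ (⊤ : ℕ∞) fun x => N x i j) (i j : Fin n) :
    ContDiff ℝ (⊤ : ℕ∞) fun x => (N x).adjugate i j := by
  simp only [Matrix.adjugate_apply]
  apply contDiff_det_comp (N := fun x => (N x).updateRow j (Pi.single i 1))
  intro a b
  rcases eq_or_ne a j with rfl | h
  · simp only [Matrix.updateRow_self]
    exact contDiff_const
  · simp only [Matrix.updateRow_ne h]
    exact hN a b

lemma contDiff_inv_entry {n : ℕ} {N : (Fin n → ℝ) → Matrix (Fin n) (Fin n) ℝ}
    (hN : ∀ i j, ContDiff ℝ (⊤ : ℕ∞) fun x => N x i j) (hdet : ∀ x, (N x).det ≠ 0) (i j : Fin n) :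
    ContDiff ℝ (⊤ : ℕ∞) fun x => (N x)⁻¹ i j := by
  simp only [Matrix.inv_def, Ring.inverse_eq_inv, Matrix.smul_apply, smul_eq_mul]
  exact ((contDiff_det_comp hN).inv hdet).mul (contDiff_adjugate_comp hN i j)

lemma posSemidef_smul_iff {m : Type*} [Fintype m] {P : Matrix m m ℝ} {c : ℝ} (hc : 0 < c) :
    (c • P).PosSemidef ↔ P.PosSemidef := by
  have aux : ∀ (d : ℝ) (Q : Matrix m m ℝ), 0 ≤ d → Q.PosSemidef → (d • Q).PosSemidef := by
    intro d Q hd hQ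
    refine ⟨?_, ?_⟩
    · unfold Matrix.IsHermitian
      rw [Matrix.conjTranspose_smul, hQ.1]
      simp
    · intro v
      exact (hQ.smul hd).2 v
  constructor
  · intro h
    have := aux c⁻¹ (c • P) (by positivity) h
    rwa [smul_smul, inv_mul_cancel₀ hc.ne', one_smul] at this
  · exact aux c P hc.le

end helpers

lemma key_identity {n : ℕ}
    (M : (Fin n → ℝ) → Matrix (Fin n) (Fin n) ℝ)
    (f : (Fin n → ℝ) → ℝ → ℝ)
    (hMsmooth : ∀ i j, ContDiff ℝ (⊤ : ℕ∞) fun x => M x i j)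
    (hMsymm : ∀ x, (M x).IsSymm)
    (hMpos : ∀ x, (M x).PosDef)
    (hf : ContDiff ℝ 2 (Function.uncurry f))
    (x : Fin n → ℝ) (t : ℝ) :
    mDot M (natGrad M f) x t + (jacobian (natGrad M f) x t)ᵀ * M x
      + M x * jacobian (natGrad M f) x t
    = (-2 : ℝ) • riemHess M (fun y => f y t) x := by
  have hFc : ContDiff ℝ 2 (fun y => f y t) := hf.comp (contDiff_id.prodMk contDiff_const)
  have hdM : ∀ (i j : Fin n) (z : Fin n → ℝ), DifferentiableAt ℝ (fun y => M y i j) z :=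
    fun i j z => ((hMsmooth i j).differentiable (by simp)) z
  have hdg : ∀ (i : Fin n) (z : Fin n → ℝ),
      DifferentiableAt ℝ (fun y => pd (fun y' => f y' t) i y) z :=
    fun i z => ((pd_contDiff hFc i).differentiable one_ne_zero) z
  have hdetne : ∀ z, (M z).det ≠ 0 := fun z => (hMpos z).det_pos.ne'
  have hInv : ∀ i j, ContDiff ℝ (⊤ : ℕ∞) fun y => (M y)⁻¹ i j :=
    fun i j => contDiff_inv_entry hMsmooth hdetne i j
  have hh_eq : ∀ l, (fun y => natGrad M f y t l)
      = (fun y => -∑ m, (M y)⁻¹ l m * pd (fun y' => f y' t) m y) := by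
    intro l
    funext y
    simp [natGrad, Matrix.mulVec, dotProduct]
  have hdh : ∀ (l : Fin n) (z : Fin n → ℝ),
      DifferentiableAt ℝ (fun y => natGrad M f y t l) z := by
    intro l z
    rw [hh_eq l]
    apply DifferentiableAt.neg
    apply DifferentiableAt.fun_sum
    intro m _
    exact (((hInv l m).differentiable (by simp)) z).mul (hdg m z)
  have base : ∀ (i : Fin n) (y : Fin n → ℝ),
      ∑ l, M y i l * natGrad M f y t l = -pd (fun y' => f y' t) i y := by
    intro i y
    have h1 : (M y).mulVec (natGrad M f y t) = -fun j => pd (fun y' => f y' t) j y := by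
      unfold natGrad
      rw [Matrix.mulVec_neg, Matrix.mulVec_mulVec,
        Matrix.mul_nonsing_inv _ (hdetne y).isUnit, Matrix.one_mulVec]
    have h2 := congrFun h1 i
    simpa [Matrix.mulVec, dotProduct] using h2
  have deriv_id : ∀ i j : Fin n,
      ∑ l, (M x i l * pd (fun y => natGrad M f y t l) j x
        + pd (fun y => M y i l) j x * natGrad M f x t l)
      = -pd (fun y => pd (fun y' => f y' t) i y) j x := by
    intro i j
    have e1 : pd (fun y => ∑ l, M y i l * natGrad M f y t l) j x
        = pd (fun y => -pd (fun y' => f y' t) i y) j x := by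
      have h3 : (fun y => ∑ l, M y i l * natGrad M f y t l)
          = (fun y => -pd (fun y' => f y' t) i y) := funext fun y => base i y
      rw [h3]
    rw [pd_sum _ _ _ _ (fun l _ => (hdM i l x).fun_mul (hdh l x)), pd_neg] at e1
    rw [← e1]
    exact Finset.sum_congr rfl fun l _ => (pd_mul j (hdM i l x) (hdh l x)).symm
  have hMxs : ∀ a b : Fin n, M x a b = M x b a := fun a b => (hMsymm x).apply b a
  have hinv_symm : ∀ a b : Fin n, (M x)⁻¹ a b = (M x)⁻¹ b a := by
    have h : ((M x)⁻¹)ᵀ = (M x)⁻¹ := by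
      rw [Matrix.transpose_nonsing_inv, (hMsymm x).eq]
    intro a b
    conv_lhs => rw [← h]
    rw [Matrix.transpose_apply]
  have hinvsum : ∀ l : Fin n,
      ∑ m, (M x)⁻¹ m l * pd (fun y' => f y' t) m x = -natGrad M f x t l := by
    intro l
    have h : natGrad M f x t l
        = -∑ m, (M x)⁻¹ l m * pd (fun y' => f y' t) m x := congrFun (hh_eq l) x
    rw [h, neg_neg]
    exact Finset.sum_congr rfl fun m _ => by rw [hinv_symm m l]
  have e_Gamma : ∀ i k : Fin n,
      ∑ m, christoffel M m i k x * pd (fun y => f y t) m x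
      = -(1/2) * ∑ l, (pd (fun y => M y i l) k x + pd (fun y => M y k l) i x
          - pd (fun y => M y i k) l x) * natGrad M f x t l := by
    intro i k
    simp only [christoffel]
    calc ∑ m, ((1/2) * ∑ l, (M x)⁻¹ m l * (pd (fun y => M y i l) k x
            + pd (fun y => M y k l) i x - pd (fun y => M y i k) l x))
            * pd (fun y => f y t) m x
        = ∑ m, ∑ l, (1/2) * ((pd (fun y => M y i l) k x + pd (fun y => M y k l) i x
            - pd (fun y => M y i k) l x) * ((M x)⁻¹ m l * pd (fun y => f y t) m x)) := by
          refine Finset.sum_congr rfl fun m _ => ?_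
          rw [mul_comm (1/2 : ℝ) _, Finset.sum_mul, Finset.sum_mul]
          refine Finset.sum_congr rfl fun l _ => ?_
          ring
      _ = ∑ l, ∑ m, (1/2) * ((pd (fun y => M y i l) k x + pd (fun y => M y k l) i x
            - pd (fun y => M y i k) l x) * ((M x)⁻¹ m l * pd (fun y => f y t) m x)) :=
          Finset.sum_comm
      _ = ∑ l, (1/2) * ((pd (fun y => M y i l) k x + pd (fun y => M y k l) i x
            - pd (fun y => M y i k) l x) * ∑ m, (M x)⁻¹ m l * pd (fun y => f y t) m x) := by
          refine Finset.sum_congr rfl fun l _ => ?_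
          rw [Finset.mul_sum, Finset.mul_sum]
      _ = ∑ l, (1/2) * ((pd (fun y => M y i l) k x + pd (fun y => M y k l) i x
            - pd (fun y => M y i k) l x) * (-natGrad M f x t l)) := by
          refine Finset.sum_congr rfl fun l _ => ?_
          rw [hinvsum l]
      _ = -(1/2) * ∑ l, (pd (fun y => M y i l) k x + pd (fun y => M y k l) i x
            - pd (fun y => M y i k) l x) * natGrad M f x t l := by
          rw [Finset.mul_sum]
          refine Finset.sum_congr rfl fun l _ => ?_
          ring
  ext i k
  simp only [Matrix.add_apply, Matrix.mul_apply, Matrix.transpose_apply, Matrix.smul_apply,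
    mDot, jacobian, riemHess, Matrix.of_apply, smul_eq_mul]
  have eMA : ∑ l, M x i l * pd (fun y => natGrad M f y t l) k x
      = -pd (fun y => pd (fun y' => f y' t) i y) k x
        - ∑ l, pd (fun y => M y i l) k x * natGrad M f x t l := by
    have h := deriv_id i k
    rw [Finset.sum_add_distrib] at h
    linarith
  have eATM : ∑ l, pd (fun y => natGrad M f y t l) i x * M x l k
      = -pd (fun y => pd (fun y' => f y' t) k y) i x
        - ∑ l, pd (fun y => M y k l) i x * natGrad M f x t l := by
    have h := deriv_id k i
    rw [Finset.sum_add_distrib] at h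
    have h2 : ∑ l, pd (fun y => natGrad M f y t l) i x * M x l k
        = ∑ l, M x k l * pd (fun y => natGrad M f y t l) i x :=
      Finset.sum_congr rfl fun l _ => by rw [hMxs l k]; ring
    rw [h2]
    linarith
  have clair : pd (fun y => pd (fun y' => f y' t) i y) k x
      = pd (fun y => pd (fun y' => f y' t) k y) i x := pd_pd_symm hFc x k i
  have expand : ∑ l, (pd (fun y => M y i l) k x + pd (fun y => M y k l) i x
        - pd (fun y => M y i k) l x) * natGrad M f x t l
      = ∑ l, pd (fun y => M y i l) k x * natGrad M f x t l
        + ∑ l, pd (fun y => M y k l) i x * natGrad M f x t l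
        - ∑ l, pd (fun y => M y i k) l x * natGrad M f x t l := by
    rw [← Finset.sum_add_distrib, ← Finset.sum_sub_distrib]
    refine Finset.sum_congr rfl fun l _ => ?_
    ring
  rw [eMA, eATM, e_Gamma i k, clair, expand]
  ring

/-- f is geodesically α-strongly convex in M for each t (H(x,t) ⪰ αM(x)) iff
the natural gradient flow is contracting with rate α in M
(Ṁ + AᵀM + MA ⪯ -2αM with A = ∂h/∂x). -/
theorem gconvex_iff_natGrad_contracting {n : ℕ}
    (M : (Fin n → ℝ) → Matrix (Fin n) (Fin n) ℝ)
    (f : (Fin n → ℝ) → ℝ → ℝ) (α : ℝ)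
    (hMsmooth : ∀ i j, ContDiff ℝ (⊤ : ℕ∞) fun x => M x i j)
    (hMsymm : ∀ x, (M x).IsSymm)
    (hMpos : ∀ x, (M x).PosDef)
    (hf : ContDiff ℝ 2 (Function.uncurry f)) :
    (∀ (x : Fin n → ℝ) (t : ℝ),
        (riemHess M (fun y => f y t) x - α • M x).PosSemidef)
    ↔ (∀ (x : Fin n → ℝ) (t : ℝ),
        (-(mDot M (natGrad M f) x t + (jacobian (natGrad M f) x t)ᵀ * M x
            + M x * jacobian (natGrad M f) x t + (2 * α) • M x)).PosSemidef) := by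
  have hEq : ∀ (x : Fin n → ℝ) (t : ℝ),
      -(mDot M (natGrad M f) x t + (jacobian (natGrad M f) x t)ᵀ * M x
          + M x * jacobian (natGrad M f) x t + (2 * α) • M x)
      = (2 : ℝ) • (riemHess M (fun y => f y t) x - α • M x) := by
    intro x t
    rw [key_identity M f hMsmooth hMsymm hMpos hf x t]
    ext i k
    simp [Matrix.add_apply, Matrix.smul_apply, Matrix.sub_apply, Matrix.neg_apply]
    ring
  constructor
  · intro H x t
    rw [hEq x t]
    exact (posSemidef_smul_iff two_pos).mpr (H x t)
  · intro H x t
    have h := H x t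
    rw [hEq x t] at h
    exact (posSemidef_smul_iff two_pos).mp h
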